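/- Under knowledge preservation and the generalized zero-one law on ρ, the value at θ_k satisfies V(θ_k) = ξ(θ_k) ∨ V⁺(θ_k) a.s., where V⁺(θ_k) := ess sup_{τ∈Θ_{θ_{k+1}}} ρ_{θ_k,τ}[ξ(τ)]. -/

import Mathlib

open MeasureTheory Filter Set
open scoped ENNReal

variable {Ω : Type*}

/-- `A` belongs to the σ-algebra `F_τ` associated with the (stopping) time `τ`. -/
def MeasAtTime {m0 : MeasurableSpace Ω} (F : Filtration ℝ m0) (τ : Ω → ℝ) (A : Set Ω) : Prop :=
  ∀ t : ℝ, MeasurableSet[F t] (A ∩ {ω | τ ω ≤ t})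

/-- `f` is `F_τ`-measurable. -/
def MeasurableAtTime {m0 : MeasurableSpace Ω} (F : Filtration ℝ m0) (τ : Ω → ℝ)
    (f : Ω → ℝ) : Prop :=
  ∀ B : Set ℝ, MeasurableSet B → MeasAtTime F τ (f ⁻¹' B)

/-- Bermudan stopping strategies: stopping times which, a.s., take the value `T`
or one of the values `θ k`. -/
def InBermudan {m0 : MeasurableSpace Ω} (F : Filtration ℝ m0) (μ : Measure Ω)
    (T : ℝ) (θ : ℕ → Ω → ℝ) (τ : Ω → ℝ) : Prop :=
  IsStoppingTime F (fun ω => (τ ω : WithTop ℝ)) ∧ ∀ᵐ ω ∂μ, τ ω = T ∨ ∃ k, τ ω = θ k ω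

/-- Admissible family of random variables indexed by Bermudan stopping strategies. -/
def AdmissibleFam {m0 : MeasurableSpace Ω} (F : Filtration ℝ m0) (μ : Measure Ω)
    (T : ℝ) (θ : ℕ → Ω → ℝ) (φ : (Ω → ℝ) → Ω → ℝ) : Prop :=
  (∀ τ, InBermudan F μ T θ τ → MeasurableAtTime F τ (φ τ)) ∧
  ∀ τ τ', InBermudan F μ T θ τ → InBermudan F μ T θ τ' →
    ∀ᵐ ω ∂μ, τ ω = τ' ω → φ τ ω = φ τ' ω

/-- p-integrability of a family. -/
def PIntFam {m0 : MeasurableSpace Ω} (F : Filtration ℝ m0) (μ : Measure Ω)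
    (T : ℝ) (θ : ℕ → Ω → ℝ) (p : ℝ≥0∞) (φ : (Ω → ℝ) → Ω → ℝ) : Prop :=
  ∀ τ, InBermudan F μ T θ τ → MemLp (φ τ) p μ

/-- `v` is an essential supremum of the set `s` of random variables. -/
def IsEssSupFam {m0 : MeasurableSpace Ω} (μ : Measure Ω) (s : Set (Ω → ℝ)) (v : Ω → ℝ) : Prop :=
  (∀ f ∈ s, f ≤ᵐ[μ] v) ∧ ∀ w : Ω → ℝ, (∀ f ∈ s, f ≤ᵐ[μ] w) → v ≤ᵐ[μ] w

/-- `V` is the value family: `V ν = ess sup_{τ ∈ Θ_ν} ρ_{ν,τ}[ξ(τ)]`,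
with `V ν` chosen `F_ν`-measurable. -/
def IsValueFam {m0 : MeasurableSpace Ω} (F : Filtration ℝ m0) (μ : Measure Ω)
    (T : ℝ) (θ : ℕ → Ω → ℝ) (ρ : (Ω → ℝ) → (Ω → ℝ) → (Ω → ℝ) → Ω → ℝ)
    (ξ V : (Ω → ℝ) → Ω → ℝ) : Prop :=
  ∀ ν, InBermudan F μ T θ ν →
    MeasurableAtTime F ν (V ν) ∧
    IsEssSupFam μ
      {g | ∃ τ, InBermudan F μ T θ τ ∧ ν ≤ᵐ[μ] τ ∧ g = ρ ν τ (ξ τ)} (V ν)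

/-- Property (ii): admissibility of the operators `ρ`. -/
def RhoAdmissible {m0 : MeasurableSpace Ω} (F : Filtration ℝ m0) (μ : Measure Ω)
    (T : ℝ) (θ : ℕ → Ω → ℝ) (p : ℝ≥0∞)
    (ρ : (Ω → ℝ) → (Ω → ℝ) → (Ω → ℝ) → Ω → ℝ) : Prop :=
  ∀ S S' τ η, InBermudan F μ T θ S → InBermudan F μ T θ S' → InBermudan F μ T θ τ →
    MeasurableAtTime F τ η → MemLp η p μ →
    ∀ᵐ ω ∂μ, S ω = S' ω → ρ S τ η ω = ρ S' τ η ω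

/-- Property (iii): knowledge preservation: `ρ_{τ,S}[η] = η` for `F_S`-measurable `η`,
`τ ∈ Θ_S`. -/
def RhoKnowledge {m0 : MeasurableSpace Ω} (F : Filtration ℝ m0) (μ : Measure Ω)
    (T : ℝ) (θ : ℕ → Ω → ℝ) (p : ℝ≥0∞)
    (ρ : (Ω → ℝ) → (Ω → ℝ) → (Ω → ℝ) → Ω → ℝ) : Prop :=
  ∀ S τ η, InBermudan F μ T θ S → InBermudan F μ T θ τ → S ≤ᵐ[μ] τ →
    MeasurableAtTime F S η → MemLp η p μ → ρ τ S η =ᵐ[μ] η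

/-- Property (iv): monotonicity of `ρ`. -/
def RhoMonotone {m0 : MeasurableSpace Ω} (F : Filtration ℝ m0) (μ : Measure Ω)
    (T : ℝ) (θ : ℕ → Ω → ℝ) (p : ℝ≥0∞)
    (ρ : (Ω → ℝ) → (Ω → ℝ) → (Ω → ℝ) → Ω → ℝ) : Prop :=
  ∀ S τ η₁ η₂, InBermudan F μ T θ S → InBermudan F μ T θ τ →
    MeasurableAtTime F τ η₁ → MemLp η₁ p μ →
    MeasurableAtTime F τ η₂ → MemLp η₂ p μ →
    η₁ ≤ᵐ[μ] η₂ → ρ S τ η₁ ≤ᵐ[μ] ρ S τ η₂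

/-- Strict monotonicity of `ρ`. -/
def RhoStrictMonotone {m0 : MeasurableSpace Ω} (F : Filtration ℝ m0) (μ : Measure Ω)
    (T : ℝ) (θ : ℕ → Ω → ℝ) (p : ℝ≥0∞)
    (ρ : (Ω → ℝ) → (Ω → ℝ) → (Ω → ℝ) → Ω → ℝ) : Prop :=
  RhoMonotone F μ T θ p ρ ∧
  ∀ S τ η₁ η₂, InBermudan F μ T θ S → InBermudan F μ T θ τ →
    MeasurableAtTime F τ η₁ → MemLp η₁ p μ →
    MeasurableAtTime F τ η₂ → MemLp η₂ p μ →
    η₁ ≤ᵐ[μ] η₂ → ρ S τ η₁ =ᵐ[μ] ρ S τ η₂ → η₁ =ᵐ[μ] η₂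

/-- Property (v): consistency of `ρ`. -/
def RhoConsistent {m0 : MeasurableSpace Ω} (F : Filtration ℝ m0) (μ : Measure Ω)
    (T : ℝ) (θ : ℕ → Ω → ℝ) (p : ℝ≥0∞)
    (ρ : (Ω → ℝ) → (Ω → ℝ) → (Ω → ℝ) → Ω → ℝ) : Prop :=
  ∀ S σ τ η, InBermudan F μ T θ S → InBermudan F μ T θ σ → InBermudan F μ T θ τ →
    S ≤ᵐ[μ] σ → σ ≤ᵐ[μ] τ →
    MeasurableAtTime F τ η → MemLp η p μ →
    ρ S σ (ρ σ τ η) =ᵐ[μ] ρ S τ η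

/-- Property (vi): "generalized zero-one law" of `ρ` along the family `ξ`. -/
def RhoZeroOneFor {m0 : MeasurableSpace Ω} (F : Filtration ℝ m0) (μ : Measure Ω)
    (T : ℝ) (θ : ℕ → Ω → ℝ) (ρ : (Ω → ℝ) → (Ω → ℝ) → (Ω → ℝ) → Ω → ℝ)
    (ξ : (Ω → ℝ) → Ω → ℝ) : Prop :=
  ∀ S τ τ' A, InBermudan F μ T θ S → InBermudan F μ T θ τ → InBermudan F μ T θ τ' →
    S ≤ᵐ[μ] τ → S ≤ᵐ[μ] τ' → MeasAtTime F S A →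
    (∀ᵐ ω ∂μ, ω ∈ A → τ ω = τ' ω) →
    ∀ᵐ ω ∂μ, ω ∈ A → ρ S τ (ξ τ) ω = ρ S τ' (ξ τ') ω

/-- Property (vii): monotone Fatou property of `ρ` with respect to the terminal condition. -/
def RhoFatou {m0 : MeasurableSpace Ω} (F : Filtration ℝ m0) (μ : Measure Ω)
    (T : ℝ) (θ : ℕ → Ω → ℝ) (p : ℝ≥0∞)
    (ρ : (Ω → ℝ) → (Ω → ℝ) → (Ω → ℝ) → Ω → ℝ) : Prop :=
  ∀ S τ, InBermudan F μ T θ S → InBermudan F μ T θ τ → S ≤ᵐ[μ] τ →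
    ∀ (η : ℕ → Ω → ℝ) (ηlim : Ω → ℝ),
      (∀ n, MeasurableAtTime F τ (η n) ∧ MemLp (η n) p μ) →
      (∀ n, η n ≤ᵐ[μ] η (n + 1)) →
      MemLp ηlim p μ →
      (∀ᵐ ω ∂μ, Tendsto (fun n => η n ω) atTop (nhds (ηlim ω))) →
      ∀ᵐ ω ∂μ, ρ S τ ηlim ω ≤ Filter.liminf (fun n => ρ S τ (η n) ω) atTop

/-- Property (i): `ρ_{S,τ}` maps `L^p(F_τ)` to `L^p(F_S)`. -/
def RhoLp {m0 : MeasurableSpace Ω} (F : Filtration ℝ m0) (μ : Measure Ω)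
    (T : ℝ) (θ : ℕ → Ω → ℝ) (p : ℝ≥0∞)
    (ρ : (Ω → ℝ) → (Ω → ℝ) → (Ω → ℝ) → Ω → ℝ) : Prop :=
  ∀ S τ η, InBermudan F μ T θ S → InBermudan F μ T θ τ →
    MeasurableAtTime F τ η → MemLp η p μ →
    MeasurableAtTime F S (ρ S τ η) ∧ MemLp (ρ S τ η) p μ

/-- `(Θ,ρ)`-supermartingale family. -/
def SupermartFam {m0 : MeasurableSpace Ω} (F : Filtration ℝ m0) (μ : Measure Ω)
    (T : ℝ) (θ : ℕ → Ω → ℝ) (p : ℝ≥0∞)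
    (ρ : (Ω → ℝ) → (Ω → ℝ) → (Ω → ℝ) → Ω → ℝ)
    (φ : (Ω → ℝ) → Ω → ℝ) : Prop :=
  AdmissibleFam F μ T θ φ ∧ PIntFam F μ T θ p φ ∧
  ∀ σ τ, InBermudan F μ T θ σ → InBermudan F μ T θ τ → σ ≤ᵐ[μ] τ →
    ρ σ τ (φ τ) ≤ᵐ[μ] φ σ

/-- `(Θ,ρ)`-martingale family. -/
def MartFam {m0 : MeasurableSpace Ω} (F : Filtration ℝ m0) (μ : Measure Ω)
    (T : ℝ) (θ : ℕ → Ω → ℝ) (p : ℝ≥0∞)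
    (ρ : (Ω → ℝ) → (Ω → ℝ) → (Ω → ℝ) → Ω → ℝ)
    (φ : (Ω → ℝ) → Ω → ℝ) : Prop :=
  AdmissibleFam F μ T θ φ ∧ PIntFam F μ T θ p φ ∧
  ∀ σ τ, InBermudan F μ T θ σ → InBermudan F μ T θ τ → σ ≤ᵐ[μ] τ →
    ρ σ τ (φ τ) =ᵐ[μ] φ σ

/-- Bermudan stopping strategies in partition form. -/
def InBermudanPart {m0 : MeasurableSpace Ω} (F : Filtration ℝ m0)
    (T : ℝ) (θ : ℕ → Ω → ℝ) (τ : Ω → ℝ) : Prop :=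
  IsStoppingTime F (fun ω => (τ ω : WithTop ℝ)) ∧ ∃ (A : ℕ → Set Ω) (Abar : Set Ω),
    Pairwise (Function.onFun Disjoint A) ∧ (∀ k, Disjoint (A k) Abar) ∧
    ((⋃ k, A k) ∪ Abar = Set.univ) ∧
    (∀ k, MeasAtTime F (θ k) (A k)) ∧ MeasurableSet[F T] Abar ∧
    (∀ k, ∀ ω ∈ A k, τ ω = θ k ω) ∧ (∀ ω ∈ Abar, τ ω = T)

/-!
`ξ(θ_k) ≤ V(θ_k)` (stop at once, knowledge preservation) and `V⁺(θ_k) ≤ V(θ_k)` (fewer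
strategies) are immediate. Conversely, a strategy `τ ≥ θ_k` splits along the `F_{θ_k}`-set
`A = {τ ≤ θ_k}`: on `A` it equals `θ_k`, while on `Aᶜ` it is already `≥ θ_{k+1}`, so it agrees
there with `τ ∨ θ_{k+1} ∈ Θ_{θ_{k+1}}`. The zero-one law bounds `ρ_{θ_k,τ}[ξ(τ)]` by `ξ(θ_k)` on
`A` and by `V⁺(θ_k)` on `Aᶜ`.
-/

section Bermudan

variable {m0 : MeasurableSpace Ω} {F : Filtration ℝ m0} {μ : Measure Ω} {T : ℝ}
  {θ : ℕ → Ω → ℝ}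

lemma inBermudan_theta (hθstop : ∀ k, IsStoppingTime F (fun ω => (θ k ω : WithTop ℝ)))
    (j : ℕ) : InBermudan F μ T θ (θ j) :=
  ⟨hθstop j, Eventually.of_forall fun _ => Or.inr ⟨j, rfl⟩⟩

lemma measAtTime_of_measurableSet {σ : Ω → ℝ}
    (hσ : IsStoppingTime F (fun ω => (σ ω : WithTop ℝ))) {A : Set Ω}
    (hA : MeasurableSet[hσ.measurableSpace] A) : MeasAtTime F σ A := fun t => by
  simpa only [WithTop.coe_le_coe] using ((hσ.measurableSet A).mp hA).2 t

lemma measurableSet_le_stoppingTime {σ τ : Ω → ℝ}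
    (hσ : IsStoppingTime F (fun ω => (σ ω : WithTop ℝ)))
    (hτ : IsStoppingTime F (fun ω => (τ ω : WithTop ℝ))) :
    MeasurableSet[hσ.measurableSpace] {ω | τ ω ≤ σ ω} := by
  simpa only [WithTop.coe_le_coe] using hτ.measurableSet_stopping_time_le hσ

lemma InBermudan.max_theta (hθstop : ∀ k, IsStoppingTime F (fun ω => (θ k ω : WithTop ℝ)))
    (hθmono : ∀ ω, Monotone fun k => θ k ω) (hθT : ∀ k, ∀ᵐ ω ∂μ, θ k ω ≤ T)
    {τ : Ω → ℝ} (hτ : InBermudan F μ T θ τ) (j : ℕ) :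
    InBermudan F μ T θ (fun ω => max (τ ω) (θ j ω)) := by
  refine ⟨hτ.1.max (hθstop j), ?_⟩
  filter_upwards [hτ.2, hθT j] with ω hτω hθjT
  rcases hτω with hτT | ⟨i, hτi⟩
  · exact Or.inl (by rw [hτT, max_eq_left hθjT])
  · rw [hτi]
    rcases le_total i j with hij | hji
    · exact Or.inr ⟨j, max_eq_right (hθmono ω hij)⟩
    · exact Or.inr ⟨i, max_eq_left (hθmono ω hji)⟩

lemma InBermudan.theta_succ_le_of_theta_lt (hθmono : ∀ ω, Monotone fun k => θ k ω)
    (hθT : ∀ k, ∀ᵐ ω ∂μ, θ k ω ≤ T) {τ : Ω → ℝ} (hτ : InBermudan F μ T θ τ) (k : ℕ) :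
    ∀ᵐ ω ∂μ, θ k ω < τ ω → θ (k + 1) ω ≤ τ ω := by
  filter_upwards [hτ.2, hθT (k + 1)] with ω hτω hθT' hlt
  rcases hτω with hτT | ⟨j, hτj⟩
  · exact hτT ▸ hθT'
  · rw [hτj] at hlt ⊢
    exact hθmono ω (Nat.succ_le_of_lt ((hθmono ω).reflect_lt hlt))

end Bermudan

section Value

variable {m0 : MeasurableSpace Ω} {F : Filtration ℝ m0} {μ : Measure Ω} {T : ℝ}
  {θ : ℕ → Ω → ℝ} {p : ℝ≥0∞} {ρ : (Ω → ℝ) → (Ω → ℝ) → (Ω → ℝ) → Ω → ℝ}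
  {ξ : (Ω → ℝ) → Ω → ℝ}

lemma rho_self_ae_eq (hξ : AdmissibleFam F μ T θ ξ) (hξp : PIntFam F μ T θ p ξ)
    (hρknow : RhoKnowledge F μ T θ p ρ) {S : Ω → ℝ} (hS : InBermudan F μ T θ S) :
    ρ S S (ξ S) =ᵐ[μ] ξ S :=
  hρknow S S (ξ S) hS hS (Eventually.of_forall fun _ => le_rfl) (hξ.1 S hS) (hξp S hS)

lemma rho_le_max_payoff_strictValue
    (hθstop : ∀ k, IsStoppingTime F (fun ω => (θ k ω : WithTop ℝ)))
    (hθmono : ∀ ω, Monotone fun k => θ k ω) (hθT : ∀ k, ∀ᵐ ω ∂μ, θ k ω ≤ T)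
    (hξ : AdmissibleFam F μ T θ ξ) (hξp : PIntFam F μ T θ p ξ)
    (hρknow : RhoKnowledge F μ T θ p ρ) (hρ01 : RhoZeroOneFor F μ T θ ρ ξ)
    {k : ℕ} {Vplus : Ω → ℝ}
    (hVplus : ∀ τ, InBermudan F μ T θ τ → θ (k + 1) ≤ᵐ[μ] τ → ρ (θ k) τ (ξ τ) ≤ᵐ[μ] Vplus)
    {τ : Ω → ℝ} (hτ : InBermudan F μ T θ τ) (hkτ : θ k ≤ᵐ[μ] τ) :
    ρ (θ k) τ (ξ τ) ≤ᵐ[μ] fun ω => max (ξ (θ k) ω) (Vplus ω) := by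
  have hθk := inBermudan_theta (μ := μ) (T := T) hθstop k
  set A : Set Ω := {ω | τ ω ≤ θ k ω}
  have hA := measurableSet_le_stoppingTime (hθstop k) hτ.1
  set τ' : Ω → ℝ := fun ω => max (τ ω) (θ (k + 1) ω)
  have hτ' : InBermudan F μ T θ τ' := hτ.max_theta hθstop hθmono hθT (k + 1)
  have hkτ' : θ (k + 1) ≤ᵐ[μ] τ' := Eventually.of_forall fun _ => le_max_right _ _
  have hρ_on_A : ∀ᵐ ω ∂μ, ω ∈ A → ρ (θ k) τ (ξ τ) ω = ρ (θ k) (θ k) (ξ (θ k)) ω := by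
    refine hρ01 _ _ _ A hθk hτ hθk hkτ (Eventually.of_forall fun _ => le_rfl)
      (measAtTime_of_measurableSet _ hA) ?_
    filter_upwards [hkτ] with ω h hω using le_antisymm hω h
  have hρ_off_A : ∀ᵐ ω ∂μ, ω ∈ Aᶜ → ρ (θ k) τ (ξ τ) ω = ρ (θ k) τ' (ξ τ') ω := by
    refine hρ01 _ _ _ Aᶜ hθk hτ hτ' hkτ ?_ (measAtTime_of_measurableSet _ hA.compl) ?_
    · exact hkτ'.mono fun ω h => (hθmono ω k.le_succ).trans h
    · filter_upwards [hτ.theta_succ_le_of_theta_lt hθmono hθT k] with ω h hω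
      exact (max_eq_left (h (lt_of_not_ge hω))).symm
  filter_upwards [hρ_on_A, hρ_off_A, rho_self_ae_eq hξ hξp hρknow hθk,
    hVplus τ' hτ' hkτ'] with ω hωA hωAc hself hτ'V
  by_cases hω : ω ∈ A
  · exact (hωA hω ▸ hself ▸ le_max_left _ _)
  · exact (hωAc hω).le.trans (hτ'V.trans (le_max_right _ _))

end Value

theorem value_eq_payoff_sup_strict_value_general
    {m0 : MeasurableSpace Ω} (F : Filtration ℝ m0) (μ : Measure Ω)
    (T : ℝ) (θ : ℕ → Ω → ℝ)
    (hθstop : ∀ k, IsStoppingTime F (fun ω => (θ k ω : WithTop ℝ)))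
    (hθmono : ∀ k ω, θ k ω ≤ θ (k + 1) ω)
    (hθT : ∀ k, ∀ᵐ ω ∂μ, θ k ω ≤ T)
    (p : ℝ≥0∞) (ρ : (Ω → ℝ) → (Ω → ℝ) → (Ω → ℝ) → Ω → ℝ)
    (ξ : (Ω → ℝ) → Ω → ℝ) (hξ : AdmissibleFam F μ T θ ξ) (hξp : PIntFam F μ T θ p ξ)
    (hρknow : RhoKnowledge F μ T θ p ρ)
    (hρ01 : RhoZeroOneFor F μ T θ ρ ξ)
    (V : (Ω → ℝ) → Ω → ℝ) (hV : IsValueFam F μ T θ ρ ξ V)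
    (k : ℕ) (Vplus : Ω → ℝ)
    (hVplus : IsEssSupFam μ
      {g | ∃ τ, InBermudan F μ T θ τ ∧ θ (k + 1) ≤ᵐ[μ] τ ∧ g = ρ (θ k) τ (ξ τ)} Vplus) :
    V (θ k) =ᵐ[μ] fun ω => max (ξ (θ k) ω) (Vplus ω) := by
  have hθmonotone : ∀ ω, Monotone fun j => θ j ω := fun ω =>
    monotone_nat_of_le_succ fun j => hθmono j ω
  have hθk := inBermudan_theta (μ := μ) (T := T) hθstop k
  obtain ⟨-, hV_ub, hV_least⟩ := hV (θ k) hθk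
  have hξ_le : ξ (θ k) ≤ᵐ[μ] V (θ k) :=
    (rho_self_ae_eq hξ hξp hρknow hθk).symm.trans_le
      (hV_ub _ ⟨θ k, hθk, Eventually.of_forall fun _ => le_rfl, rfl⟩)
  have hVplus_le : Vplus ≤ᵐ[μ] V (θ k) := by
    refine hVplus.2 _ ?_
    rintro _ ⟨τ, hτ, hkτ, rfl⟩
    exact hV_ub _ ⟨τ, hτ, hkτ.mono fun ω h => (hθmono k ω).trans h, rfl⟩
  have hV_le : V (θ k) ≤ᵐ[μ] fun ω => max (ξ (θ k) ω) (Vplus ω) := by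
    refine hV_least _ ?_
    rintro _ ⟨τ, hτ, hkτ, rfl⟩
    exact rho_le_max_payoff_strictValue hθstop hθmonotone hθT hξ hξp hρknow hρ01
      (fun τ' hτ' hkτ' => hVplus.1 _ ⟨τ', hτ', hkτ', rfl⟩) hτ hkτ
  filter_upwards [hξ_le, hVplus_le, hV_le] with ω h₁ h₂ h₃
  exact le_antisymm h₃ (max_le h₁ h₂)

theorem value_eq_payoff_sup_strict_value
    {m0 : MeasurableSpace Ω} (F : Filtration ℝ m0) (μ : Measure Ω)
    (T : ℝ) (hT : 0 < T) (θ : ℕ → Ω → ℝ)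
    (hθstop : ∀ k, IsStoppingTime F (fun ω => (θ k ω : WithTop ℝ)))
    (hθmono : ∀ k ω, θ k ω ≤ θ (k + 1) ω)
    (hθ0 : ∀ ω, θ 0 ω = 0)
    (hθT : ∀ k, ∀ᵐ ω ∂μ, θ k ω ≤ T)
    (hθlim : ∀ᵐ ω ∂μ, Tendsto (fun k => θ k ω) atTop (nhds T))
    (p : ℝ≥0∞) (hp : 1 ≤ p) (ρ : (Ω → ℝ) → (Ω → ℝ) → (Ω → ℝ) → Ω → ℝ)
    (ξ : (Ω → ℝ) → Ω → ℝ) (hξ : AdmissibleFam F μ T θ ξ) (hξp : PIntFam F μ T θ p ξ)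
    (hρknow : RhoKnowledge F μ T θ p ρ)
    (hρ01 : RhoZeroOneFor F μ T θ ρ ξ)
    (V : (Ω → ℝ) → Ω → ℝ) (hV : IsValueFam F μ T θ ρ ξ V)
    (k : ℕ) (Vplus : Ω → ℝ)
    (hVplus : IsEssSupFam μ
      {g | ∃ τ, InBermudan F μ T θ τ ∧ θ (k + 1) ≤ᵐ[μ] τ ∧ g = ρ (θ k) τ (ξ τ)} Vplus) :
    V (θ k) =ᵐ[μ] fun ω => max (ξ (θ k) ω) (Vplus ω) :=
  value_eq_payoff_sup_strict_value_general F μ T θ hθstop hθmono hθT p ρ ξ hξ hξp hρknow hρ01 V hV k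
    Vplus hVplus
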